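/- arXiv:1704.06111 — 3 statements merged into one kernel-verified Lean document; each statement's English description precedes it below -/
import Mathlib

section
/- Let (P, L) be a Fischer space without isolated points, and let U be the group with generators t_x (x ∈ P) and relations t_x² = 1 and t_y t_x t_y = t_{τ_y(x)}. Then (U, {t_x : x ∈ P}) is a 3-transposition group: each t_x is an involution, the t_x are pairwise distinct, the set {t_x} is closed under conjugation and generates U, and for all x, y ∈ P the product t_x t_y has order at most 3; specifically, order 1 if x = y, order 2 if x ≁ y, and order 3 if x ∼ y. -/
/-- A Fischer space on a point set `P`, encoded as a partial triple system
(`collinear` and the "third point" operation `wedge`) in which every map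
`τ_x` (fixing `x` and non-collinear points and sending `y ∼ x` to `x∧y`)
is an automorphism of the geometry.  This is Buekenhout's characterization
of Fischer spaces. -/
structure FischerSpace (P : Type*) where
  collinear : P → P → Prop
  collinear_symm : ∀ {x y}, collinear x y → collinear y x
  collinear_irrefl : ∀ x, ¬ collinear x x
  wedge : P → P → P
  wedge_comm : ∀ {x y}, collinear x y → wedge x y = wedge y x
  collinear_wedge : ∀ {x y}, collinear x y → collinear x (wedge x y)
  wedge_wedge : ∀ {x y}, collinear x y → wedge x (wedge x y) = y
  wedge_ne_left : ∀ {x y}, collinear x y → wedge x y ≠ x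
  wedge_ne_right : ∀ {x y}, collinear x y → wedge x y ≠ y
  /-- the point permutation `τ_x` -/
  tau : P → P → P
  tau_of_collinear : ∀ {x y}, collinear x y → tau x y = wedge x y
  tau_of_not_collinear : ∀ {x y}, ¬ collinear x y → tau x y = y
  tau_hom_collinear : ∀ (x) {y z}, collinear y z → collinear (tau x y) (tau x z)
  tau_hom_wedge : ∀ (x) {y z}, collinear y z → tau x (wedge y z) = wedge (tau x y) (tau x z)

namespace FischerSpace

variable {P : Type*} (F : FischerSpace P)

/-- `τ_x` is an involution. -/
theorem tau_involutive (x : P) : Function.Involutive (F.tau x) := by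
  intro y
  by_cases h : F.collinear x y
  · rw [F.tau_of_collinear h, F.tau_of_collinear (F.collinear_wedge h), F.wedge_wedge h]
  · rw [F.tau_of_not_collinear h, F.tau_of_not_collinear h]

/-- `τ_x` as a permutation of the point set. -/
def tauPerm (x : P) : Equiv.Perm P := (F.tau_involutive x).toPerm

/-- A point is isolated if it is collinear with no other point. -/
def Isolated (x : P) : Prop := ∀ y, ¬ F.collinear x y

open Finsupp in
/-- The product of two basis vectors of the Matsuo algebra `M_α`. -/
noncomputable def matsuoBasisMul {k : Type*} [Field k] (α : k) (x y : P) : P →₀ k :=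
  open Classical in
  if x = y then Finsupp.single x 1
  else if F.collinear x y then
    (α / 2) • (Finsupp.single x 1 + Finsupp.single y 1 - Finsupp.single (F.wedge x y) 1)
  else 0

/-- The multiplication of the Matsuo algebra `M_α(P, L)`, as a bilinear map on the
free vector space on the point set. -/
noncomputable def matsuoMul (k : Type*) [Field k] (α : k) :
    (P →₀ k) →ₗ[k] (P →₀ k) →ₗ[k] (P →₀ k) :=
  Finsupp.lsum k fun x =>
    LinearMap.toSpanSingleton k ((P →₀ k) →ₗ[k] (P →₀ k))
      (Finsupp.lsum k fun y => LinearMap.toSpanSingleton k (P →₀ k) (F.matsuoBasisMul α x y))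

/-- The `φ`-eigenspace of (the multiplication operator by) the point `x` in the
Matsuo algebra `M_α`. -/
noncomputable def matsuoEig (k : Type*) [Field k] (α : k) (x : P) (φ : k) :
    Submodule k (P →₀ k) :=
  Module.End.eigenspace (F.matsuoMul k α (Finsupp.single x 1)) φ

end FischerSpace

/-- The relators of the universal group of a Fischer space: `t_x² = 1` and
`t_y t_x t_y = t_{τ_y(x)}`. -/
def uRels {P : Type*} (F : FischerSpace P) : Set (FreeGroup P) :=
  (Set.range fun x : P => FreeGroup.of x * FreeGroup.of x) ∪
  (Set.range fun p : P × P =>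
    FreeGroup.of p.2 * FreeGroup.of p.1 * FreeGroup.of p.2 *
      (FreeGroup.of (F.tau p.2 p.1))⁻¹)

/-- The generator `t_x` of the universal group of a Fischer space. -/
def tGen {P : Type*} (F : FischerSpace P) (x : P) : PresentedGroup (uRels F) :=
  PresentedGroup.of x


namespace FischerSpace

variable {P : Type*} (F : FischerSpace P)

theorem tau_self (x : P) : F.tau x x = x :=
  F.tau_of_not_collinear (F.collinear_irrefl x)

theorem tau_tau_tau (y x z : P) :
    F.tau y (F.tau x (F.tau y z)) = F.tau (F.tau y x) z := by
  set w := F.tau y z with hw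
  by_cases h : F.collinear x w
  · have h2 : F.collinear (F.tau y x) (F.tau y w) := F.tau_hom_collinear y h
    rw [show F.tau y w = z from by rw [hw, F.tau_involutive y z]] at h2
    rw [F.tau_of_collinear h, F.tau_hom_wedge y h, F.tau_of_collinear h2,
      show F.tau y w = z from by rw [hw, F.tau_involutive y z]]
  · have h2 : ¬ F.collinear (F.tau y x) z := by
      intro hc
      have := F.tau_hom_collinear y hc
      rw [F.tau_involutive y x, ← hw] at this
      exact h this
    rw [F.tau_of_not_collinear h, F.tau_of_not_collinear h2, hw, F.tau_involutive y z]

theorem tau_injective_pts (hiso : ∀ p : P, ¬ F.Isolated p) {x y : P}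
    (h : ∀ z, F.tau x z = F.tau y z) : x = y := by
  by_contra hxy
  by_cases hc : F.collinear x y
  · have h1 : F.tau x y = F.wedge x y := F.tau_of_collinear hc
    have h2 : F.tau y y = y := F.tau_self y
    have := h y
    rw [h1, h2] at this
    exact F.wedge_ne_right hc this
  · obtain ⟨z, hz⟩ : ∃ z, F.collinear x z := by
      have := hiso x; unfold Isolated at this; push_neg at this; exact this
    have hxz : F.tau x z = F.wedge x z := F.tau_of_collinear hz
    have hne : F.tau x z ≠ z := by rw [hxz]; exact F.wedge_ne_right hz
    have hyz : F.collinear y z := by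
      by_contra hyc
      exact hne (by rw [h z, F.tau_of_not_collinear hyc])
    have hwz : F.wedge y z = F.wedge x z := by
      have := h z
      rw [hxz, F.tau_of_collinear hyz] at this
      exact this.symm
    have hzx : F.collinear z x := F.collinear_symm hz
    have hzy : F.collinear z y := F.collinear_symm hyz
    have : F.tau z x = F.tau z y := by
      rw [F.tau_of_collinear hzx, F.tau_of_collinear hzy, ← F.wedge_comm hz,
        ← F.wedge_comm hyz, hwz]
    exact hxy ((F.tau_involutive z).injective this)

end FischerSpace

section Aux

variable {P : Type*} (F : FischerSpace P)

theorem uRels_mapsto_one (r : FreeGroup P) (hr : r ∈ uRels F) :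
    PresentedGroup.mk (uRels F) r = 1 :=
  (QuotientGroup.eq_one_iff r).2 (Subgroup.subset_normalClosure hr)

theorem tGen_sq (x : P) : tGen F x * tGen F x = 1 := by
  have := uRels_mapsto_one F (FreeGroup.of x * FreeGroup.of x) (Or.inl ⟨x, rfl⟩)
  simp only [map_mul] at this; exact this

theorem tGen_inv (x : P) : (tGen F x)⁻¹ = tGen F x :=
  inv_eq_of_mul_eq_one_right (tGen_sq F x)

theorem tGen_conj (x y : P) :
    tGen F y * tGen F x * tGen F y = tGen F (F.tau y x) := by
  have := uRels_mapsto_one F _ (Or.inr ⟨(x, y), rfl⟩)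
  simp only [map_mul, map_inv] at this
  have h := mul_eq_one_iff_eq_inv.mp this
  rw [inv_inv] at h
  exact h

/-- The homomorphism from the universal group to permutations of `P`. -/
noncomputable def uToPerm : PresentedGroup (uRels F) →* Equiv.Perm P := by
  refine PresentedGroup.toGroup (f := fun x => F.tauPerm x) ?_
  rintro r (⟨x, rfl⟩ | ⟨⟨x, y⟩, rfl⟩)
  · simp only [map_mul, FreeGroup.lift_apply_of]
    ext z
    simp [FischerSpace.tauPerm, Function.Involutive.coe_toPerm, F.tau_involutive x z]
  · simp only [map_mul, map_inv, FreeGroup.lift_apply_of]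
    rw [mul_inv_eq_one]
    ext z
    simp only [Equiv.Perm.mul_apply, FischerSpace.tauPerm, Function.Involutive.coe_toPerm]
    exact F.tau_tau_tau y x z

theorem uToPerm_tGen (x : P) : uToPerm F (tGen F x) = F.tauPerm x :=
  PresentedGroup.toGroup.of _

theorem tauPerm_apply (x z : P) : F.tauPerm x z = F.tau x z := by
  simp [FischerSpace.tauPerm, Function.Involutive.coe_toPerm]

theorem tGen_ne_one (hiso : ∀ p : P, ¬ F.Isolated p) (x : P) : tGen F x ≠ 1 := by
  intro h
  obtain ⟨z, hz⟩ : ∃ z, F.collinear x z := by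
    have := hiso x; unfold FischerSpace.Isolated at this; push_neg at this; exact this
  have := congrArg (uToPerm F) h
  rw [uToPerm_tGen, map_one] at this
  have hz2 := congrFun (congrArg (fun e : Equiv.Perm P => (e : P → P)) this) z
  simp only [Equiv.Perm.coe_one, id_eq] at hz2
  rw [tauPerm_apply, F.tau_of_collinear hz] at hz2
  exact F.wedge_ne_right hz hz2

theorem tGen_injective (hiso : ∀ p : P, ¬ F.Isolated p) :
    Function.Injective (tGen F) := by
  intro x y h
  refine F.tau_injective_pts hiso fun z => ?_
  have := congrArg (uToPerm F) h
  rw [uToPerm_tGen, uToPerm_tGen] at this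
  have := DFunLike.congr_fun this z
  rwa [tauPerm_apply, tauPerm_apply] at this

end Aux

/-- Theorem 4.14(i): for a Fischer space without isolated points, the
universal group `U` with its generators `t_x` is a 3-transposition group: the `t_x` are
pairwise distinct involutions, closed under conjugation and generating `U`, and the
order of `t_x t_y` is 1, 2 or 3 according as `x = y`, `x ≁ y` or `x ∼ y`. -/
theorem stmt14 {P : Type*} (F : FischerSpace P) (hiso : ∀ p : P, ¬ F.Isolated p) :
    (∀ x : P, orderOf (tGen F x) = 2) ∧
    Function.Injective (tGen F) ∧
    (∀ (g : PresentedGroup (uRels F)) (x : P), ∃ z : P, g * tGen F x * g⁻¹ = tGen F z) ∧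
    Subgroup.closure (Set.range (tGen F)) = ⊤ ∧
    (∀ x y : P,
      (x = y → orderOf (tGen F x * tGen F y) = 1) ∧
      (x ≠ y → ¬ F.collinear x y → orderOf (tGen F x * tGen F y) = 2) ∧
      (F.collinear x y → orderOf (tGen F x * tGen F y) = 3)) := by
  have hconj : ∀ (g : PresentedGroup (uRels F)) (x : P),
      g * tGen F x * g⁻¹ = tGen F (uToPerm F g x) := by
    intro g
    have hg : g ∈ Subgroup.closure (Set.range (tGen F)) := by
      have : Subgroup.closure (Set.range (tGen F)) = ⊤ :=
        PresentedGroup.closure_range_of (uRels F)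
      rw [this]; exact Subgroup.mem_top g
    induction hg using Subgroup.closure_induction with
    | mem t ht =>
      obtain ⟨y, rfl⟩ := ht
      intro x
      rw [tGen_inv, tGen_conj, uToPerm_tGen, tauPerm_apply]
    | one => intro x; simp
    | mul a b _ _ ha hb =>
      intro x
      have : a * b * tGen F x * (a * b)⁻¹ = a * (b * tGen F x * b⁻¹) * a⁻¹ := by
        group
      rw [this, hb x, ha, map_mul, Equiv.Perm.mul_apply]
    | inv a _ ha =>
      intro x
      set y := uToPerm F a⁻¹ x with hy
      have hxy : uToPerm F a y = x := by
        rw [hy, map_inv]; exact (uToPerm F a).apply_symm_apply x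
      have := ha y
      rw [hxy] at this
      rw [← this]; group
  refine ⟨?_, tGen_injective F hiso, ?_, PresentedGroup.closure_range_of (uRels F), ?_⟩
  · intro x
    have : Fact (Nat.Prime 2) := ⟨Nat.prime_two⟩
    exact orderOf_eq_prime (by rw [pow_two]; exact tGen_sq F x) (tGen_ne_one F hiso x)
  · intro g x
    exact ⟨uToPerm F g x, hconj g x⟩
  · intro x y
    refine ⟨?_, ?_, ?_⟩
    · rintro rfl
      rw [orderOf_eq_one_iff]
      exact tGen_sq F x
    · intro hxy hc
      have : Fact (Nat.Prime 2) := ⟨Nat.prime_two⟩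
      have hne : tGen F x * tGen F y ≠ 1 := by
        intro h
        exact hxy (tGen_injective F hiso (by
          rw [← tGen_inv F y] at h
          exact mul_inv_eq_one.mp h))
      refine orderOf_eq_prime ?_ hne
      have hyx : F.tau y x = x := F.tau_of_not_collinear fun h => hc (F.collinear_symm h)
      have : (tGen F x * tGen F y) ^ 2 = tGen F x * (tGen F y * tGen F x * tGen F y) := by
        rw [pow_two]; simp only [mul_assoc]
      rw [this, tGen_conj, hyx, tGen_sq]
    · intro hc
      have : Fact (Nat.Prime 3) := ⟨Nat.prime_three⟩
      have hxy : x ≠ y := fun h => F.collinear_irrefl x (h ▸ hc)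
      have hne : tGen F x * tGen F y ≠ 1 := by
        intro h
        exact hxy (tGen_injective F hiso (by
          rw [← tGen_inv F y] at h
          exact mul_inv_eq_one.mp h))
      refine orderOf_eq_prime ?_ hne
      have h3 : (tGen F x * tGen F y) ^ 3 =
          (tGen F x * tGen F y * tGen F x) * (tGen F y * tGen F x * tGen F y) := by
        rw [pow_succ, pow_two]; simp only [mul_assoc]
      rw [h3, tGen_conj, tGen_conj, F.tau_of_collinear hc,
        F.tau_of_collinear (F.collinear_symm hc), F.wedge_comm (F.collinear_symm hc)]
      exact tGen_sq F _
end

section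
/- Let (P, L) be a Fischer space without isolated points, U its universal group generated by t_x (x ∈ P) with relations t_x² = 1 and (t_x)^{t_y} = t_{τ_y(x)}. For points x, y, z ∈ P: the product t_x t_y has order 3 with (t_x)^{t_y} = t_z if and only if x ∼ y and z = x∧y. Hence the Fischer space constructed from the 3-transposition group (U, {t_x}) (points: the involutions t_x; lines: triples {t_x, t_y, (t_x)^{t_y}} when ord(t_x t_y) = 3) is isomorphic to (P, L) via x ↦ t_x. -/
section Aux

variable {P : Type*} (F : FischerSpace P)

theorem FischerSpace.tau_conj (x y w : P) :
    F.tau x (F.tau y w) = F.tau (F.tau x y) (F.tau x w) := by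
  by_cases h : F.collinear y w
  · rw [F.tau_of_collinear h, F.tau_hom_wedge x h,
      F.tau_of_collinear (F.tau_hom_collinear x h)]
  · have hnc : ¬ F.collinear (F.tau x y) (F.tau x w) := by
      intro hc
      have h2 := F.tau_hom_collinear x hc
      rw [F.tau_involutive x y, F.tau_involutive x w] at h2
      exact h h2
    rw [F.tau_of_not_collinear h, F.tau_of_not_collinear hnc]

theorem FischerSpace.tau_injective (hiso : ∀ p : P, ¬ F.Isolated p)
    {x y : P} (h : ∀ z, F.tau x z = F.tau y z) : x = y := by
  by_cases hxy : F.collinear x y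
  · have h1 := h y
    rw [F.tau_of_collinear hxy, F.tau_of_not_collinear (F.collinear_irrefl y)] at h1
    exact absurd h1 (F.wedge_ne_right hxy)
  · obtain ⟨z, hz⟩ := not_forall_not.mp (hiso x)
    have h1 := h z
    rw [F.tau_of_collinear hz] at h1
    by_cases hyz : F.collinear y z
    · rw [F.tau_of_collinear hyz] at h1
      have e1 : F.wedge z x = F.wedge z y := by
        rw [F.wedge_comm (F.collinear_symm hz), F.wedge_comm (F.collinear_symm hyz), h1]
      calc x = F.wedge z (F.wedge z x) := (F.wedge_wedge (F.collinear_symm hz)).symm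
        _ = F.wedge z (F.wedge z y) := by rw [e1]
        _ = y := F.wedge_wedge (F.collinear_symm hyz)
    · rw [F.tau_of_not_collinear hyz] at h1
      exact absurd h1 (F.wedge_ne_right hz)

theorem uRels_lift_eq_one : ∀ r ∈ uRels F, FreeGroup.lift F.tauPerm r = 1 := by
  rintro r (⟨x, rfl⟩ | ⟨⟨a, b⟩, rfl⟩)
  · simp only [map_mul, FreeGroup.lift_apply_of]
    ext z
    exact F.tau_involutive x z
  · simp only [map_mul, map_inv, FreeGroup.lift_apply_of]
    rw [mul_inv_eq_one]
    ext z
    show F.tau b (F.tau a (F.tau b z)) = F.tau (F.tau b a) z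
    rw [F.tau_conj b a (F.tau b z), F.tau_involutive b z]

/-- The permutation representation of the universal group. -/
noncomputable def permHom : PresentedGroup (uRels F) →* Equiv.Perm P :=
  PresentedGroup.toGroup (uRels_lift_eq_one F)

theorem permHom_tGen (x : P) : permHom F (tGen F x) = F.tauPerm x :=
  PresentedGroup.toGroup.of _

theorem uRels_mem_eq_one {r : FreeGroup P} (h : r ∈ uRels F) :
    PresentedGroup.mk (uRels F) r = 1 :=
  (QuotientGroup.eq_one_iff _).mpr (Subgroup.subset_normalClosure h)

end Aux

/-- Theorem 4.14, continued: in the universal group of a Fischer space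
without isolated points, \`t_x t_y\` has order 3 with \`(t_x)^{t_y} = t_z\` iff \`x ∼ y\` and
\`z = x∧y\`; together with the injectivity of \`x ↦ t_x\` this says that the Fischer space
constructed from the 3-transposition group \`(U, {t_x})\` is isomorphic to \`(P, L)\`
via \`x ↦ t_x\`. -/
theorem stmt15 {P : Type*} (F : FischerSpace P) (hiso : ∀ p : P, ¬ F.Isolated p) :
    Function.Injective (tGen F) ∧
    (∀ x y z : P,
      (orderOf (tGen F x * tGen F y) = 3 ∧ (tGen F y)⁻¹ * tGen F x * tGen F y = tGen F z) ↔
      (F.collinear x y ∧ z = F.wedge x y)) := by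
  haveI : Fact (Nat.Prime 3) := ⟨by norm_num⟩
  refine ⟨tGen_injective F hiso, fun x y z => ⟨?_, ?_⟩⟩
  · rintro ⟨h3, hz⟩
    have hcol : F.collinear x y := by
      by_contra hc
      have hyx : ¬ F.collinear y x := fun h => hc (F.collinear_symm h)
      have hsq : (tGen F x * tGen F y) ^ 2 = 1 := by
        have := tGen_conj F x y
        rw [F.tau_of_not_collinear hyx] at this
        calc (tGen F x * tGen F y) ^ 2
            = tGen F x * (tGen F y * tGen F x * tGen F y) := by
              simp only [pow_succ, pow_zero, one_mul, mul_assoc]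
          _ = tGen F x * tGen F x := by rw [this]
          _ = 1 := tGen_sq F x
      have hd := orderOf_dvd_of_pow_eq_one hsq
      rw [h3] at hd
      omega
    refine ⟨hcol, ?_⟩
    have hz' : tGen F z = tGen F (F.wedge x y) := by
      rw [← hz, tGen_inv, tGen_conj, F.tau_of_collinear (F.collinear_symm hcol),
        F.wedge_comm (F.collinear_symm hcol)]
    exact tGen_injective F hiso hz'
  · rintro ⟨hcol, rfl⟩
    have hconj : tGen F y * tGen F x * tGen F y = tGen F (F.wedge x y) := by
      rw [tGen_conj, F.tau_of_collinear (F.collinear_symm hcol),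
        F.wedge_comm (F.collinear_symm hcol)]
    constructor
    · apply orderOf_eq_prime
      · have hconj' : tGen F x * tGen F y * tGen F x = tGen F (F.wedge x y) := by
          rw [tGen_conj, F.tau_of_collinear hcol]
        calc (tGen F x * tGen F y) ^ 3
            = (tGen F x * tGen F y * tGen F x) * (tGen F y * tGen F x * tGen F y) := by
              simp only [pow_succ, pow_zero, one_mul, mul_assoc]
          _ = tGen F (F.wedge x y) * tGen F (F.wedge x y) := by rw [hconj, hconj']
          _ = 1 := tGen_sq F _
      · intro h1
        have h2 : permHom F (tGen F x * tGen F y) = 1 := by rw [h1, map_one]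
        rw [map_mul, permHom_tGen, permHom_tGen] at h2
        have h3 := Equiv.ext_iff.mp h2 y
        simp only [Equiv.Perm.coe_one, id_eq, Equiv.Perm.coe_mul, Function.comp] at h3
        have : F.tau x (F.tau y y) = y := h3
        rw [F.tau_of_not_collinear (F.collinear_irrefl y), F.tau_of_collinear hcol] at this
        exact F.wedge_ne_right hcol this
    · rw [tGen_inv, hconj]
end

section
/- Let (P, L) be a Fischer space, M_α its Matsuo algebra, U its universal group, V a k-vector space and ρ: U → GL(V) a homomorphism, with the associated module action v·x = 0 or αv according as ρ(t_x)v = v or -v. Then for all v ∈ V, a ∈ M_α and x ∈ P: ρ(t_x)(v · a) = ρ(t_x)(v) · τ_x(a). -/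
/-- Lemma 5.2: with the module structure on `V` built from a
representation `ρ` of the universal group, `ρ(t_x)(v · a) = ρ(t_x)(v) · τ_x(a)` for all
`v ∈ V`, `a ∈ M_α` and points `x`, where `τ_x` is the Miyamoto involution of `M_α`
(the linear extension of the point permutation `τ_x`). -/
theorem stmt17 {P : Type*} (F : FischerSpace P)
    {k : Type*} [Field k] (hchar : (2 : k) ≠ 0) (α : k) (hα0 : α ≠ 0) (hα1 : α ≠ 1)
    {V : Type*} [AddCommGroup V] [Module k V]
    (ρ : PresentedGroup (uRels F) →* (V ≃ₗ[k] V))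
    (act : V →ₗ[k] (P →₀ k) →ₗ[k] V)
    (hact0 : ∀ (x : P) (v : V), ρ (tGen F x) v = v → act v (Finsupp.single x 1) = 0)
    (hactα : ∀ (x : P) (v : V), ρ (tGen F x) v = -v → act v (Finsupp.single x 1) = α • v) :
    ∀ (v : V) (a : P →₀ k) (x : P),
      ρ (tGen F x) (act v a) =
        act (ρ (tGen F x) v) (Finsupp.lmapDomain k k (F.tau x) a) := by
  have tsq : ∀ y : P, tGen F y * tGen F y = 1 := by
    intro y
    have : (QuotientGroup.mk (FreeGroup.of y * FreeGroup.of y) : PresentedGroup (uRels F)) = 1 := by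
      apply (QuotientGroup.eq_one_iff _).2
      exact Subgroup.subset_normalClosure (Or.inl ⟨y, rfl⟩)
    exact this
  have trel : ∀ x y : P, tGen F x * tGen F y * tGen F x = tGen F (F.tau x y) := by
    intro x y
    have : (QuotientGroup.mk (FreeGroup.of x * FreeGroup.of y * FreeGroup.of x *
        (FreeGroup.of (F.tau x y))⁻¹) : PresentedGroup (uRels F)) = 1 := by
      apply (QuotientGroup.eq_one_iff _).2
      exact Subgroup.subset_normalClosure (Or.inr ⟨(y, x), rfl⟩)
    have h : tGen F x * tGen F y * tGen F x * (tGen F (F.tau x y))⁻¹ = 1 := by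
      exact this
    exact mul_inv_eq_one.mp h
  have tinv : ∀ (y : P) (v : V), ρ (tGen F y) (ρ (tGen F y) v) = v := by
    intro y v
    have h := congrArg ρ (tsq y)
    rw [map_mul, map_one] at h
    calc ρ (tGen F y) (ρ (tGen F y) v) = (ρ (tGen F y) * ρ (tGen F y)) v := rfl
      _ = v := by rw [h]; rfl
  have key : ∀ (y : P) (v : V),
      act v (Finsupp.single y 1) = ((2:k)⁻¹ * α) • (v - ρ (tGen F y) v) := by
    intro y v
    set w := ρ (tGen F y) v with hw
    have h1 : ρ (tGen F y) ((2:k)⁻¹ • (v + w)) = (2:k)⁻¹ • (v + w) := by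
      rw [map_smul, map_add, ← hw, tinv, add_comm]
    have h2 : ρ (tGen F y) ((2:k)⁻¹ • (v - w)) = -((2:k)⁻¹ • (v - w)) := by
      rw [map_smul, map_sub, ← hw, tinv, ← smul_neg, neg_sub]
    have hv : v = (2:k)⁻¹ • (v + w) + (2:k)⁻¹ • (v - w) := by
      rw [← smul_add]
      have : v + w + (v - w) = (2:k) • v := by
        rw [two_smul]; abel
      rw [this, smul_smul, inv_mul_cancel₀ hchar, one_smul]
    calc act v (Finsupp.single y 1)
        = act ((2:k)⁻¹ • (v + w)) (Finsupp.single y 1)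
          + act ((2:k)⁻¹ • (v - w)) (Finsupp.single y 1) := by
          conv_lhs => rw [hv]
          rw [map_add]; rfl
      _ = ((2:k)⁻¹ * α) • (v - w) := by
          rw [hact0 y _ h1, hactα y _ h2, zero_add, smul_smul, mul_comm]
  have comm : ∀ (x y : P) (v : V),
      ρ (tGen F x) (ρ (tGen F y) v) = ρ (tGen F (F.tau x y)) (ρ (tGen F x) v) := by
    intro x y v
    have h : tGen F x * tGen F y = tGen F (F.tau x y) * tGen F x := by
      rw [← trel x y]
      rw [mul_assoc, mul_assoc, tsq, mul_one]
    have := congrArg (fun g => ρ g v) h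
    simpa [map_mul] using this
  intro v a x
  induction a using Finsupp.induction_linear with
  | zero => simp
  | add f g hf hg => simp only [map_add, hf, hg]
  | single y c =>
    have hs : (Finsupp.single y c : P →₀ k) = c • Finsupp.single y 1 := by
      rw [Finsupp.smul_single, smul_eq_mul, mul_one]
    rw [hs, map_smul, map_smul, map_smul, map_smul, Finsupp.lmapDomain_apply,
      Finsupp.mapDomain_single, key, key, map_smul, map_sub, comm]
end
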